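/- With S(θ) = sin(Nθ/2)/sin(θ/2) and J*(a;b) = (z'/z)'(a+b) + e^{−N(a+b)} z(a+b) z(−a−b) where z(x)=1/(1−e^{−x}), the identity N² + J*(iu; −iv) + J*(−iu; iv) = N² − S(u−v)S(v−u) = det [[N, S(u−v)],[S(v−u), N]] holds for all real u ≠ v with u − v ∉ 2πℤ. -/

import Mathlib

open Matrix

/-- `z(x) = 1/(1 - e^{-x})`. -/
noncomputable def zfun (x : ℂ) : ℂ := (1 - Complex.exp (-x))⁻¹

/-- The logarithmic derivative `z'/z`. -/
noncomputable def zlog (x : ℂ) : ℂ := deriv zfun x / zfun x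

/-- `J*(a;b) = (z'/z)'(a+b) + e^{-N(a+b)} z(a+b) z(-a-b)`. -/
noncomputable def Jstar2 (N : ℕ) (a b : ℂ) : ℂ :=
  deriv zlog (a + b) +
    Complex.exp (-(N : ℂ) * (a + b)) * zfun (a + b) * zfun (-(a + b))

/-- The sine kernel `S(θ) = sin(Nθ/2)/sin(θ/2)`. -/
noncomputable def sineKernel (N : ℕ) (θ : ℝ) : ℝ :=
  Real.sin (N * θ / 2) / Real.sin (θ / 2)

/-!
The logarithmic derivative of `z` is `z(-x) = (1 - eˣ)⁻¹`, so `(z'/z)' = -z(x)z(-x)`, and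
`z(x)z(-x) = -(4 sinh²(x/2))⁻¹`. Hence with `w = a + b` the two values of `J*` add up to
`z(w)z(-w)(e^{Nw} + e^{-Nw} - 2) = -(sinh(Nw/2)/sinh(w/2))²`, which at `w = iθ` is `-S(θ)²`.
-/

open Complex

namespace Complex

theorem four_mul_sinh_half_sq (x : ℂ) : 4 * sinh (x / 2) ^ 2 = exp x + exp (-x) - 2 := by
  have h := cosh_two_mul (x / 2)
  rw [mul_div_cancel₀ x two_ne_zero, cosh_sq, cosh] at h
  linear_combination -2 * h

theorem exp_neg_mul_exp (x : ℂ) : exp (-x) * exp x = 1 := by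
  rw [← exp_add, neg_add_cancel, exp_zero]

theorem exp_neg_eq_one_iff {x : ℂ} : exp (-x) = 1 ↔ exp x = 1 := by
  rw [Complex.exp_neg, inv_eq_one]

theorem exp_mul_I_ne_one {θ : ℝ} (h : ∀ k : ℤ, θ ≠ 2 * Real.pi * k) : exp (θ * I) ≠ 1 := by
  rw [Ne, Complex.exp_eq_one_iff]
  rintro ⟨k, hk⟩
  refine h k (ofReal_injective (mul_right_cancel₀ I_ne_zero ?_))
  push_cast
  linear_combination hk

end Complex

lemma zfun_mul_zfun_neg (x : ℂ) : zfun x * zfun (-x) = -(4 * sinh (x / 2) ^ 2)⁻¹ := by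
  rw [zfun, zfun, ← mul_inv, neg_neg, four_mul_sinh_half_sq, ← inv_neg]
  congr 1
  linear_combination exp_neg_mul_exp x

lemma hasDerivAt_zfun {x : ℂ} (h : exp (-x) ≠ 1) :
    HasDerivAt zfun (-exp (-x) * zfun x ^ 2) x := by
  have h1 : HasDerivAt (fun y => 1 - exp (-y)) (exp (-x)) x := by
    simpa using ((hasDerivAt_exp (-x)).comp x (hasDerivAt_neg x)).const_sub 1
  refine (h1.inv (sub_ne_zero.mpr h.symm)).congr_deriv ?_
  rw [zfun, inv_pow, div_eq_mul_inv]

lemma zlog_eq_zfun_neg (x : ℂ) : zlog x = zfun (-x) := by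
  by_cases h : exp (-x) = 1
  · have hx := exp_neg_eq_one_iff.mp h
    rw [zlog]
    simp only [zfun, neg_neg, h, hx, sub_self, _root_.inv_zero, div_zero]
  · have hx := exp_neg_eq_one_iff.not.mp h
    rw [zlog, (hasDerivAt_zfun h).deriv]
    simp only [zfun, neg_neg]
    have h' := sub_ne_zero.mpr (Ne.symm h)
    have hx' := sub_ne_zero.mpr (Ne.symm hx)
    field_simp
    linear_combination exp_neg_mul_exp x

lemma deriv_zlog {x : ℂ} (h : exp x ≠ 1) : deriv zlog x = -(zfun x * zfun (-x)) := by
  have hzlog : HasDerivAt zlog (exp x * zfun (-x) ^ 2) x := by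
    rw [funext zlog_eq_zfun_neg]
    refine ((hasDerivAt_zfun (by rwa [neg_neg])).comp x (hasDerivAt_neg x)).congr_deriv ?_
    rw [neg_neg]
    ring
  rw [hzlog.deriv]
  have h' : 1 - exp x ≠ 0 := sub_ne_zero.mpr h.symm
  have h'' : 1 - exp (-x) ≠ 0 := sub_ne_zero.mpr (Ne.symm (exp_neg_eq_one_iff.not.mpr h))
  simp only [zfun, neg_neg]
  field_simp
  linear_combination -exp_neg_mul_exp x

lemma Jstar2_add_Jstar2_neg (N : ℕ) {a b : ℂ} (h : exp (a + b) ≠ 1) :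
    Jstar2 N a b + Jstar2 N (-a) (-b) = -(sinh (N * (a + b) / 2) / sinh ((a + b) / 2)) ^ 2 := by
  rw [Jstar2, Jstar2, ← neg_add, deriv_zlog h, deriv_zlog (exp_neg_eq_one_iff.not.mpr h), neg_neg]
  calc _ = zfun (a + b) * zfun (-(a + b)) * (4 * sinh (N * (a + b) / 2) ^ 2) := by
        rw [four_mul_sinh_half_sq, neg_mul_neg, neg_mul]
        ring
    _ = _ := by
        rw [zfun_mul_zfun_neg]
        ring

lemma ofReal_sineKernel (N : ℕ) (θ : ℝ) :
    (sineKernel N θ : ℂ) = sinh (N * (θ * I) / 2) / sinh (θ * I / 2) := by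
  rw [sineKernel, show N * (θ * I) / 2 = (N * θ / 2 : ℂ) * I by ring,
    show θ * I / 2 = (θ / 2 : ℂ) * I by ring, sinh_mul_I, sinh_mul_I,
    mul_div_mul_right _ _ I_ne_zero]
  push_cast
  rfl

lemma sineKernel_neg (N : ℕ) (θ : ℝ) : sineKernel N (-θ) = sineKernel N θ := by
  rw [sineKernel, sineKernel, mul_neg, neg_div, neg_div, Real.sin_neg, Real.sin_neg, neg_div_neg_eq]

theorem pair_correlation_det_general (N : ℕ) (u v : ℝ)
    (huv : ∀ k : ℤ, u - v ≠ 2 * Real.pi * k) :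
    (N : ℂ) ^ 2 + Jstar2 N (Complex.I * u) (-(Complex.I * v))
        + Jstar2 N (-(Complex.I * u)) (Complex.I * v)
      = (N : ℂ) ^ 2 - (sineKernel N (u - v) : ℂ) * (sineKernel N (v - u) : ℂ) ∧
    (N : ℂ) ^ 2 + Jstar2 N (Complex.I * u) (-(Complex.I * v))
        + Jstar2 N (-(Complex.I * u)) (Complex.I * v)
      = Matrix.det !![(N : ℂ), (sineKernel N (u - v) : ℂ);
                      (sineKernel N (v - u) : ℂ), (N : ℂ)] := by
  have hw : I * u + -(I * v) = ((u - v : ℝ) : ℂ) * I := by push_cast; ring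
  have hsum := Jstar2_add_Jstar2_neg N (hw ▸ exp_mul_I_ne_one huv)
  rw [neg_neg, hw, ← ofReal_sineKernel] at hsum
  have hJ : (N : ℂ) ^ 2 + Jstar2 N (I * u) (-(I * v)) + Jstar2 N (-(I * u)) (I * v)
      = (N : ℂ) ^ 2 - (sineKernel N (u - v) : ℂ) * (sineKernel N (v - u) : ℂ) := by
    rw [add_assoc, hsum, ← neg_sub u, sineKernel_neg]
    ring
  refine ⟨hJ, ?_⟩
  rw [hJ, det_fin_two_of]
  ring

/-- Pair correlation identity:
`N² + J*(iu;-iv) + J*(-iu;iv) = N² - S(u-v)S(v-u) = det [[N, S(u-v)],[S(v-u), N]]`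
for real `u, v` with `u - v ∉ 2πℤ`. -/
theorem pair_correlation_det (N : ℕ) (hN : 0 < N) (u v : ℝ)
    (huv : ∀ k : ℤ, u - v ≠ 2 * Real.pi * k) :
    (N : ℂ) ^ 2 + Jstar2 N (Complex.I * u) (-(Complex.I * v))
        + Jstar2 N (-(Complex.I * u)) (Complex.I * v)
      = (N : ℂ) ^ 2 - (sineKernel N (u - v) : ℂ) * (sineKernel N (v - u) : ℂ) ∧
    (N : ℂ) ^ 2 + Jstar2 N (Complex.I * u) (-(Complex.I * v))
        + Jstar2 N (-(Complex.I * u)) (Complex.I * v)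
      = Matrix.det !![(N : ℂ), (sineKernel N (u - v) : ℂ);
                      (sineKernel N (v - u) : ℂ), (N : ℂ)] :=
  pair_correlation_det_general N u v huv
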